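/- arXiv:2502.05397 — 2 statements merged into one kernel-verified Lean document; each statement's English description precedes it below -/
import Mathlib

section
/- Let C be the ORCA coverage recursion on a finite grid {1,…,T} × {1,…,J} with P ∈ [0,1]. Then C(T,J) ≤ ∏_{k=1}^{J} (max_{i ≤ T} P(i,k)); the final ordered coverage is bounded above by the product over subgoals of the best single-timestep occupancy probabilities. -/
/-! Induction on `t` and then `j`: the first branch of the `max` is the induction hypothesis
in `t`, and in the second each of the two factors is bounded by its counterpart in the product. -/

/-- ORCA ordered-coverage dynamic program. `cov P t j` is `C(t,j)` with the
conventions `C(0,j) = 0` (no time elapsed), `C(t,0) = 1` for `t ≥ 1`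
(empty prefix of subgoals), and for `t, j ≥ 1`
`C(t,j) = max (C(t-1,j)) (C(t,j-1) * P t j)`, which for nonnegative `P`
yields the base cases `C(1,1) = P 1 1`, `C(1,j) = C(1,j-1) * P 1 j`, and
`C(t,1) = max (C(t-1,1)) (P t 1)`. -/
def cov (P : ℕ → ℕ → ℝ) : ℕ → ℕ → ℝ
  | 0, _ => 0
  | _ + 1, 0 => 1
  | t + 1, j + 1 => max (cov P t (j + 1)) (cov P (t + 1) j * P (t + 1) (j + 1))

theorem cov_le_prod_Icc {P : ℕ → ℕ → ℝ} {M : ℕ → ℝ} {T : ℕ} (hP : ∀ t j, 0 ≤ P t j)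
    (hM : ∀ k, 0 ≤ M k) (hPM : ∀ t ∈ Finset.Icc 1 T, ∀ k, P t k ≤ M k) :
    ∀ t ≤ T, ∀ j, cov P t j ≤ ∏ k ∈ Finset.Icc 1 j, M k := by
  have hprod : ∀ j, 0 ≤ ∏ k ∈ Finset.Icc 1 j, M k := fun j => Finset.prod_nonneg fun k _ => hM k
  intro t
  induction t with
  | zero => intro _ j; simpa [cov] using hprod j
  | succ t ih_t =>
    intro ht j
    induction j with
    | zero => simp [cov]
    | succ j ih_j =>
      rw [cov, Finset.prod_Icc_succ_top (Nat.le_add_left 1 j)]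
      refine max_le ?_ ?_
      · rw [← Finset.prod_Icc_succ_top (Nat.le_add_left 1 j)]
        exact ih_t (Nat.le_of_succ_le ht) (j + 1)
      · exact mul_le_mul ih_j (hPM (t + 1) (Finset.mem_Icc.mpr ⟨Nat.le_add_left 1 t, ht⟩) (j + 1))
          (hP _ _) (hprod j)

theorem stmt13_general (P : ℕ → ℕ → ℝ) (hP : ∀ t j, 0 ≤ P t j ∧ P t j ≤ 1) (T J : ℕ)
    (hT : 1 ≤ T) :
    cov P T J
      ≤ ∏ k ∈ Finset.Icc 1 J,
          (Finset.Icc 1 T).sup' (Finset.nonempty_Icc.mpr hT) (fun i => P i k) := by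
  have hT_mem : 1 ∈ Finset.Icc 1 T := Finset.mem_Icc.mpr ⟨le_rfl, hT⟩
  refine cov_le_prod_Icc (fun t j => (hP t j).1) (fun k => ?_) (fun t ht k => ?_) T le_rfl J
  · exact (hP 1 k).1.trans (Finset.le_sup' (fun i => P i k) hT_mem)
  · exact Finset.le_sup' (fun i => P i k) ht

theorem stmt13 (P : ℕ → ℕ → ℝ) (hP : ∀ t j, 0 ≤ P t j ∧ P t j ≤ 1) (T J : ℕ)
    (hT : 1 ≤ T) (hJ : 1 ≤ J) :
    cov P T J
      ≤ ∏ k ∈ Finset.Icc 1 J,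
          (Finset.Icc 1 T).sup' (Finset.nonempty_Icc.mpr hT) (fun i => P i k) :=
  stmt13_general P hP T J hT
end

section
/- Let C be the ORCA coverage recursion with P ∈ [0,1] and suppose T ≥ J. If for each k ∈ {1,…,J} there exists a time i_k with i_1 ≤ i_2 ≤ … ≤ i_J ≤ T and P(i_k, k) = 1, then C(T,J) = 1. -/
namespace cov

variable (P : ℕ → ℕ → ℝ)

theorem le_one (hP : ∀ t j, 0 ≤ P t j ∧ P t j ≤ 1) : ∀ t j, cov P t j ≤ 1
  | 0, _ => by simp [cov]
  | _ + 1, 0 => by simp [cov]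
  | t + 1, j + 1 => by
    rw [cov]
    refine max_le (le_one hP t (j + 1)) ?_
    exact mul_le_one₀ (le_one hP (t + 1) j) (hP (t + 1) (j + 1)).1 (hP (t + 1) (j + 1)).2

theorem zero_right {t : ℕ} (ht : t ≠ 0) : cov P t 0 = 1 := by
  obtain ⟨t, rfl⟩ := Nat.exists_eq_succ_of_ne_zero ht
  rw [cov]

theorem le_succ_left (t j : ℕ) : cov P t j ≤ cov P (t + 1) j := by
  rcases t, j with ⟨_ | t, _ | j⟩
  all_goals simp only [cov, le_refl, zero_le_one, le_max_left]

theorem monotone_left (j : ℕ) : Monotone (cov P · j) :=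
  monotone_nat_of_le_succ fun t => le_succ_left P t j

theorem one_le_succ_right {t j : ℕ} (ht : t ≠ 0) (hcov : 1 ≤ cov P t j)
    (hPtj : P t (j + 1) = 1) : 1 ≤ cov P t (j + 1) := by
  obtain ⟨t, rfl⟩ := Nat.exists_eq_succ_of_ne_zero ht
  rw [cov]
  exact le_max_of_le_right (by rwa [hPtj, mul_one])

theorem one_le_of_staircase {J : ℕ} {i : ℕ → ℕ}
    (hmono : ∀ k l, 1 ≤ k → k ≤ l → l ≤ J → i k ≤ i l) (hi1 : 1 ≤ i 1)
    (hPi : ∀ k, 1 ≤ k → k ≤ J → P (i k) k = 1) :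
    ∀ k, 1 ≤ k → k ≤ J → 1 ≤ cov P (i k) k := by
  intro k hk
  induction k, hk using Nat.le_induction with
  | base =>
    intro hJ
    exact one_le_succ_right P (by omega) (zero_right P (by omega)).ge (hPi 1 le_rfl hJ)
  | succ k hk ih =>
    intro hkJ
    have hik : i k ≤ i (k + 1) := hmono k (k + 1) hk k.le_succ hkJ
    have hpos : i (k + 1) ≠ 0 := by have := hmono 1 (k + 1) le_rfl (by omega) hkJ; omega
    refine one_le_succ_right P hpos ?_ (hPi (k + 1) (by omega) hkJ)
    exact (ih (by omega)).trans (monotone_left P k hik)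

end cov

theorem stmt14_general (P : ℕ → ℕ → ℝ) (hP : ∀ t j, 0 ≤ P t j ∧ P t j ≤ 1) (T J : ℕ)
    (hJ : 1 ≤ J)
    (hex : ∃ i : ℕ → ℕ,
      (∀ k l, 1 ≤ k → k ≤ l → l ≤ J → i k ≤ i l) ∧
      1 ≤ i 1 ∧ i J ≤ T ∧
      ∀ k, 1 ≤ k → k ≤ J → P (i k) k = 1) :
    cov P T J = 1 := by
  obtain ⟨i, hmono, hi1, hiJ, hPi⟩ := hex
  have hstair : 1 ≤ cov P (i J) J := cov.one_le_of_staircase P hmono hi1 hPi J hJ le_rfl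
  exact le_antisymm (cov.le_one P hP T J) (hstair.trans (cov.monotone_left P J hiJ))

theorem stmt14 (P : ℕ → ℕ → ℝ) (hP : ∀ t j, 0 ≤ P t j ∧ P t j ≤ 1) (T J : ℕ)
    (hJ : 1 ≤ J) (hTJ : J ≤ T)
    (hex : ∃ i : ℕ → ℕ,
      (∀ k l, 1 ≤ k → k ≤ l → l ≤ J → i k ≤ i l) ∧
      1 ≤ i 1 ∧ i J ≤ T ∧
      ∀ k, 1 ≤ k → k ≤ J → P (i k) k = 1) :
    cov P T J = 1 :=
  stmt14_general P hP T J hJ hex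
end
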